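/- Let d ≥ 1 and let U₁, V₁, W₁, U₂, V₂, W₂ be nonempty compact convex subsets of ℝ^d such that U₁ = V₁ + W₁ and U₂ = V₂ + W₂ (Minkowski sums), i.e. W₁ = U₁ ⊖ V₁ and W₂ = U₂ ⊖ V₂ are Hukuhara differences. Then d_H(W₁, W₂) ≤ d_H(U₁, U₂) + d_H(V₁, V₂). (Set-level version of property (P8).) -/
import Mathlib

open Pointwise Metric

/-- Rådström cancellation: if `A + B ⊆ C + B` with `B` nonempty bounded and
`C` closed convex, then `A ⊆ C`. -/
lemma radstrom_cancel {E : Type*} [NormedAddCommGroup E] [NormedSpace ℝ E]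
    {A B C : Set E} (hBne : B.Nonempty) (hBb : Bornology.IsBounded B)
    (hCc : IsClosed C) (hCv : Convex ℝ C) (h : A + B ⊆ C + B) : A ⊆ C := by
  intro a ha
  have key : ∀ b : B, ∃ c : C, ∃ b' : B, a + (b : E) = (c : E) + (b' : E) := by
    rintro ⟨b, hb⟩
    obtain ⟨c, hc, b', hb', hcb⟩ := h (Set.add_mem_add ha hb)
    exact ⟨⟨c, hc⟩, ⟨b', hb'⟩, hcb.symm⟩
  choose g1 g2 hg using key
  obtain ⟨b0, hb0⟩ := hBne
  obtain ⟨b, hb_zero, hb_succ⟩ : ∃ f : ℕ → B, f 0 = ⟨b0, hb0⟩ ∧ ∀ n, f (n + 1) = g2 (f n) :=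
    ⟨fun n => Nat.rec ⟨b0, hb0⟩ (fun _ bn => g2 bn) n, rfl, fun _ => rfl⟩
  set c : ℕ → C := fun n => g1 (b n) with hc_def
  have hrec : ∀ n, a + (b n : E) = (c n : E) + (b (n + 1) : E) := by
    intro n; rw [hb_succ n]; exact hg (b n)
  have hsum : ∀ n, ∑ k ∈ Finset.range n, (c k : E) = n • a + (b 0 : E) - (b n : E) := by
    intro n
    induction n with
    | zero => simp
    | succ n ih =>
      have hc : (c n : E) = a + (b n : E) - (b (n + 1) : E) :=
        eq_sub_of_add_eq (hrec n).symm
      rw [Finset.sum_range_succ, ih, hc, succ_nsmul]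
      abel
  obtain ⟨M, hM⟩ := hBb.subset_closedBall 0
  have hmem : ∀ n : ℕ, 0 < n → a + (n : ℝ)⁻¹ • ((b 0 : E) - (b n : E)) ∈ C := by
    intro n hn
    have h1 : (n : ℝ)⁻¹ • (∑ k ∈ Finset.range n, (c k : E)) ∈ C := by
      rw [Finset.smul_sum]
      refine hCv.sum_mem (fun i _ => by positivity) ?_ (fun i _ => (c i).2)
      simp [Finset.sum_const, mul_inv_cancel₀ (by positivity : (n : ℝ) ≠ 0)]
    have h2 : (n : ℝ)⁻¹ • (∑ k ∈ Finset.range n, (c k : E))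
        = a + (n : ℝ)⁻¹ • ((b 0 : E) - (b n : E)) := by
      rw [hsum, smul_sub, smul_add, ← Nat.cast_smul_eq_nsmul ℝ n a, smul_smul,
        inv_mul_cancel₀ (by positivity : (n : ℝ) ≠ 0), one_smul, smul_sub]
      abel
    rwa [h2] at h1
  -- the points converge to `a`
  have htend : Filter.Tendsto (fun n : ℕ => a + (n : ℝ)⁻¹ • ((b 0 : E) - (b n : E)))
      Filter.atTop (nhds a) := by
    have hb' : ∀ n, ‖(b 0 : E) - (b n : E)‖ ≤ 2 * M := by
      intro n
      have h0 : ‖(b 0 : E)‖ ≤ M := by simpa using hM (b 0).2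
      have hn : ‖(b n : E)‖ ≤ M := by simpa using hM (b n).2
      calc ‖(b 0 : E) - (b n : E)‖ ≤ ‖(b 0 : E)‖ + ‖(b n : E)‖ := norm_sub_le _ _
        _ ≤ 2 * M := by linarith
    have hlim : Filter.Tendsto (fun n : ℕ => 2 * M * (n : ℝ)⁻¹) Filter.atTop (nhds 0) := by
      have h0 : Filter.Tendsto (fun n : ℕ => (n : ℝ)⁻¹) Filter.atTop (nhds 0) :=
        tendsto_inv_atTop_zero.comp tendsto_natCast_atTop_atTop
      simpa using tendsto_const_nhds.mul h0
    have : Filter.Tendsto (fun n : ℕ => (n : ℝ)⁻¹ • ((b 0 : E) - (b n : E)))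
        Filter.atTop (nhds 0) := by
      apply squeeze_zero_norm (fun n => ?_) hlim
      rw [norm_smul]
      calc ‖((n : ℝ)⁻¹)‖ * ‖(b 0 : E) - (b n : E)‖ ≤ ‖((n : ℝ)⁻¹)‖ * (2 * M) := by
            apply mul_le_mul_of_nonneg_left (hb' n) (norm_nonneg _)
        _ = 2 * M * (n : ℝ)⁻¹ := by
            rw [Real.norm_eq_abs, abs_of_nonneg (by positivity)]; ring
    simpa using tendsto_const_nhds.add this
  exact hCc.mem_of_tendsto htend (Filter.eventually_atTop.2 ⟨1, fun n hn => hmem n hn⟩)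

lemma subset_add_closedBall {E : Type*} [NormedAddCommGroup E]
    {A B : Set E} (hBc : IsCompact B) (hBne : B.Nonempty)
    (hfin : EMetric.hausdorffEdist A B ≠ ⊤) :
    A ⊆ B + Metric.closedBall 0 (Metric.hausdorffDist A B) := by
  intro x hx
  obtain ⟨b, hb, hbd⟩ := hBc.exists_infDist_eq_dist hBne x
  refine ⟨b, hb, x - b, ?_, by show b + (x - b) = x; rw [add_comm, sub_add_cancel]⟩
  rw [mem_closedBall, dist_zero_right, ← dist_eq_norm, ← hbd]
  exact Metric.infDist_le_hausdorffDist_of_mem hx hfin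

lemma hukuhara_one_side {E : Type*} [NormedAddCommGroup E] [NormedSpace ℝ E]
    (U₁ V₁ W₁ U₂ V₂ W₂ : Set E)
    (hU2ne : U₂.Nonempty) (hU2cp : IsCompact U₂)
    (hV1ne : V₁.Nonempty) (hV1cp : IsCompact V₁)
    (hV2ne : V₂.Nonempty) (hV2cp : IsCompact V₂)
    (hW2cp : IsCompact W₂) (hW2cv : Convex ℝ W₂)
    (hU1ne : U₁.Nonempty) (hU1cp : IsCompact U₁)
    (h1 : U₁ = V₁ + W₁) (h2 : U₂ = V₂ + W₂) :
    ∀ w ∈ W₁, Metric.infDist w W₂ ≤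
      Metric.hausdorffDist U₁ U₂ + Metric.hausdorffDist V₁ V₂ := by
  set r := Metric.hausdorffDist U₁ U₂ with hr
  set s := Metric.hausdorffDist V₁ V₂ with hs
  have finU : EMetric.hausdorffEdist U₁ U₂ ≠ ⊤ :=
    Metric.hausdorffEdist_ne_top_of_nonempty_of_bounded hU1ne hU2ne
      hU1cp.isBounded hU2cp.isBounded
  have finV : EMetric.hausdorffEdist V₂ V₁ ≠ ⊤ :=
    Metric.hausdorffEdist_ne_top_of_nonempty_of_bounded hV2ne hV1ne
      hV2cp.isBounded hV1cp.isBounded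
  have hVsub : V₂ ⊆ V₁ + Metric.closedBall 0 s := by
    have := subset_add_closedBall hV1cp hV1ne finV
    rwa [Metric.hausdorffDist_comm] at this
  have hball : Metric.closedBall (0 : E) s + Metric.closedBall (0 : E) r ⊆
      Metric.closedBall (0 : E) (r + s) := by
    rintro z ⟨x, hx, y, hy, rfl⟩
    rw [Metric.mem_closedBall, dist_zero_right] at *
    calc ‖x + y‖ ≤ ‖x‖ + ‖y‖ := norm_add_le _ _
      _ ≤ r + s := by linarith
  have hkey : W₁ + V₁ ⊆ (W₂ + Metric.closedBall 0 (r + s)) + V₁ := by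
    calc W₁ + V₁ = U₁ := by rw [h1, add_comm]
      _ ⊆ U₂ + Metric.closedBall 0 r := subset_add_closedBall hU2cp hU2ne finU
      _ = (V₂ + W₂) + Metric.closedBall 0 r := by rw [h2]
      _ ⊆ ((V₁ + Metric.closedBall 0 s) + W₂) + Metric.closedBall 0 r :=
          Set.add_subset_add_right (Set.add_subset_add_right hVsub)
      _ = (W₂ + (Metric.closedBall 0 s + Metric.closedBall 0 r)) + V₁ := by abel
      _ ⊆ (W₂ + Metric.closedBall 0 (r + s)) + V₁ :=
          Set.add_subset_add_right (Set.add_subset_add_left hball)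
  have hW : W₁ ⊆ W₂ + Metric.closedBall 0 (r + s) :=
    radstrom_cancel hV1ne hV1cp.isBounded
      (Metric.isClosed_closedBall.add_left_of_isCompact hW2cp)
      (hW2cv.add (convex_closedBall 0 (r + s))) hkey
  intro w hw
  obtain ⟨w2, hw2, z, hz, rfl⟩ := hW hw
  rw [Metric.mem_closedBall, dist_zero_right] at hz
  calc Metric.infDist (w2 + z) W₂ ≤ dist (w2 + z) w2 := Metric.infDist_le_dist_of_mem hw2
    _ ≤ r + s := by rw [dist_eq_norm]; simpa using hz

/-- (P8), set level: if `U₁ = V₁ + W₁` and `U₂ = V₂ + W₂` for nonempty compact convex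
subsets of `ℝ^d` (i.e. `W₁ = U₁ ⊖ V₁`, `W₂ = U₂ ⊖ V₂` are Hukuhara differences), then
`d_H(W₁, W₂) ≤ d_H(U₁, U₂) + d_H(V₁, V₂)`. -/
theorem hausdorffDist_hukuhara_le (d : ℕ) (hd : 1 ≤ d)
    (U₁ V₁ W₁ U₂ V₂ W₂ : Set (EuclideanSpace ℝ (Fin d)))
    (hU1ne : U₁.Nonempty) (hU1cp : IsCompact U₁) (hU1cv : Convex ℝ U₁)
    (hV1ne : V₁.Nonempty) (hV1cp : IsCompact V₁) (hV1cv : Convex ℝ V₁)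
    (hW1ne : W₁.Nonempty) (hW1cp : IsCompact W₁) (hW1cv : Convex ℝ W₁)
    (hU2ne : U₂.Nonempty) (hU2cp : IsCompact U₂) (hU2cv : Convex ℝ U₂)
    (hV2ne : V₂.Nonempty) (hV2cp : IsCompact V₂) (hV2cv : Convex ℝ V₂)
    (hW2ne : W₂.Nonempty) (hW2cp : IsCompact W₂) (hW2cv : Convex ℝ W₂)
    (h1 : U₁ = V₁ + W₁) (h2 : U₂ = V₂ + W₂) :
    Metric.hausdorffDist W₁ W₂ ≤
      Metric.hausdorffDist U₁ U₂ + Metric.hausdorffDist V₁ V₂ := by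
  have hnn : 0 ≤ Metric.hausdorffDist U₁ U₂ + Metric.hausdorffDist V₁ V₂ :=
    add_nonneg Metric.hausdorffDist_nonneg Metric.hausdorffDist_nonneg
  refine Metric.hausdorffDist_le_of_infDist hnn ?_ ?_
  · exact hukuhara_one_side U₁ V₁ W₁ U₂ V₂ W₂ hU2ne hU2cp hV1ne hV1cp hV2ne hV2cp
      hW2cp hW2cv hU1ne hU1cp h1 h2
  · have := hukuhara_one_side U₂ V₂ W₂ U₁ V₁ W₁ hU1ne hU1cp hV2ne hV2cp hV1ne hV1cp
      hW1cp hW1cv hU2ne hU2cp h2 h1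
    rwa [Metric.hausdorffDist_comm (s := U₂) (t := U₁), Metric.hausdorffDist_comm (s := V₂) (t := V₁)] at this
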